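/- arXiv:1908.02055 — 7 statements merged into one kernel-verified Lean document; each statement's English description precedes it below -/
import Mathlib

section
/- Suppose the initial lattice states satisfy 0 ≤ a_i^0, 0 ≤ r_i^0 and a_i^0 + r_i^0 ≤ 1 for all sites i = 1,…,N, and suppose the CFL-type condition 1 − 2τH·V_max − τ·max(2H·V_max, B_a, B_r, A_a, A_r) ≥ 0 holds. Then for every time step k ≥ 0 and every site i = 1,…,N the states generated by the explicit Euler scheme satisfy 0 ≤ a_i^k, 0 ≤ r_i^k and a_i^k + r_i^k ≤ 1. -/
/-!
Under the CFL condition one Euler step writes `x_i^{k+1}` (for `x = a, r`) and `1 - ρ_i^{k+1}` as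
combinations of old values with nonnegative coefficients. Across one edge `i ~ j`, the hops out of
site `i` remove at most `V_max · x_i` of species `x`, and the hops into `i` of both species add at
most `V_max · (1 - ρ_i)` to `ρ_i`, being carried by the mass `ρ_j ≤ 1` and blocked by the free space
`1 - ρ_i`. A site has at most two neighbours, so the hopping terms cost at most `2 H V_max` times
the quantity being kept nonnegative; a boundary influx `A (1 - ρ_i)` or outflux `B x_i` costs at
most `max (A, B)` times it, so after multiplication by `τ` the CFL condition leaves the coefficient
of the old value nonnegative.
-/

def InBox (a r : ℝ) : Prop := 0 ≤ a ∧ 0 ≤ r ∧ a + r ≤ 1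

def Adjacent (i j : ℕ) : Prop := j = i + 1 ∨ i = j + 1

theorem Adjacent.symm {i j : ℕ} (h : Adjacent i j) : Adjacent j i := Or.symm h

def hopFlux (x ρ : ℕ → ℝ) (w : ℕ → ℕ → ℝ) (i j : ℕ) : ℝ :=
  -x i * (1 - ρ j) * w i j + x j * (1 - ρ i) * w j i

structure FluxBound (D a r Fa Fr : ℝ) : Prop where
  neg_le_fst : -(D * a) ≤ Fa
  neg_le_snd : -(D * r) ≤ Fr
  add_le : Fa + Fr ≤ D * (1 - (a + r))

namespace FluxBound

variable {D D' a r Fa Fr Fa' Fr' : ℝ}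

theorem add (h : FluxBound D a r Fa Fr) (h' : FluxBound D' a r Fa' Fr') :
    FluxBound (D + D') a r (Fa + Fa') (Fr + Fr') where
  neg_le_fst := by linarith [h.neg_le_fst, h'.neg_le_fst]
  neg_le_snd := by linarith [h.neg_le_snd, h'.neg_le_snd]
  add_le := by linarith [h.add_le, h'.add_le]

theorem mono (h : FluxBound D a r Fa Fr) (hbox : InBox a r) (hD : D ≤ D') :
    FluxBound D' a r Fa Fr := by
  obtain ⟨ha, hr, hρ⟩ := hbox
  have hρ' : 0 ≤ 1 - (a + r) := by linarith
  exact
    { neg_le_fst := by linarith [h.neg_le_fst, mul_le_mul_of_nonneg_right hD ha]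
      neg_le_snd := by linarith [h.neg_le_snd, mul_le_mul_of_nonneg_right hD hr]
      add_le := by linarith [h.add_le, mul_le_mul_of_nonneg_right hD hρ'] }

end FluxBound

theorem neg_mul_le_hopFlux {x ρ : ℕ → ℝ} {w : ℕ → ℕ → ℝ} {i j : ℕ} {V : ℝ}
    (hxi : 0 ≤ x i) (hxj : 0 ≤ x j) (hρi : ρ i ≤ 1) (hρj : 0 ≤ ρ j)
    (hwij : w i j ∈ Set.Icc 0 V) (hwji : 0 ≤ w j i) :
    -(V * x i) ≤ hopFlux x ρ w i j := by
  have hout : (1 - ρ j) * w i j ≤ V := by nlinarith [hwij.1, hwij.2]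
  have hin : 0 ≤ x j * (1 - ρ i) * w j i :=
    mul_nonneg (mul_nonneg hxj (by linarith)) hwji
  unfold hopFlux
  linarith [mul_le_mul_of_nonneg_left hout hxi]

theorem hopFlux_add_hopFlux_le {a r : ℕ → ℝ} {wa wr : ℕ → ℕ → ℝ} {i j : ℕ} {V : ℝ}
    (hi : InBox (a i) (r i)) (hj : InBox (a j) (r j))
    (hwa : wa i j ∈ Set.Icc 0 V) (hwr : wr i j ∈ Set.Icc 0 V)
    (hwa' : wa j i ∈ Set.Icc 0 V) (hwr' : wr j i ∈ Set.Icc 0 V) :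
    hopFlux a (a + r) wa i j + hopFlux r (a + r) wr i j ≤ V * (1 - (a i + r i)) := by
  obtain ⟨hai, hri, hρi⟩ := hi
  obtain ⟨haj, hrj, hρj⟩ := hj
  have hout : 0 ≤ (a i * wa i j + r i * wr i j) * (1 - (a j + r j)) :=
    mul_nonneg (add_nonneg (mul_nonneg hai hwa.1) (mul_nonneg hri hwr.1)) (by linarith)
  have hin : a j * wa j i + r j * wr j i ≤ V := by
    nlinarith [mul_le_mul_of_nonneg_left hwa'.2 haj, mul_le_mul_of_nonneg_left hwr'.2 hrj,
      hwa'.1.trans hwa'.2]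
  calc hopFlux a (a + r) wa i j + hopFlux r (a + r) wr i j
      = -((a i * wa i j + r i * wr i j) * (1 - (a j + r j)))
        + (a j * wa j i + r j * wr j i) * (1 - (a i + r i)) := by
        simp only [hopFlux, Pi.add_apply]; ring
    _ ≤ V * (1 - (a i + r i)) := by nlinarith

theorem fluxBound_hopFlux {a r : ℕ → ℝ} {wa wr : ℕ → ℕ → ℝ} {V : ℝ}
    (hwa : ∀ i j, Adjacent i j → wa i j ∈ Set.Icc 0 V)
    (hwr : ∀ i j, Adjacent i j → wr i j ∈ Set.Icc 0 V) {i j : ℕ} (hij : Adjacent i j)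
    (hi : InBox (a i) (r i)) (hj : InBox (a j) (r j)) :
    FluxBound V (a i) (r i) (hopFlux a (a + r) wa i j) (hopFlux r (a + r) wr i j) := by
  have hρj : 0 ≤ (a + r) j := add_nonneg hj.1 hj.2.1
  exact
    { neg_le_fst := neg_mul_le_hopFlux hi.1 hj.1 hi.2.2 hρj (hwa i j hij) (hwa j i hij.symm).1
      neg_le_snd := neg_mul_le_hopFlux hi.2.1 hj.2.1 hi.2.2 hρj (hwr i j hij) (hwr j i hij.symm).1
      add_le := hopFlux_add_hopFlux_le hi hj (hwa i j hij) (hwr i j hij) (hwa j i hij.symm)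
        (hwr j i hij.symm) }

theorem eulerStep_nonneg {x ρ F τ H D A B : ℝ} (hx : 0 ≤ x) (hρ : ρ ≤ 1) (hF : -(D * x) ≤ F)
    (hτ : 0 ≤ τ) (hH : 0 ≤ H) (hA : 0 ≤ A) (hCFL : τ * (H * D) + τ * B ≤ 1) :
    0 ≤ x + τ * (H * F + A * (1 - ρ) - B * x) := by
  have hkeep : 0 ≤ x * (1 - τ * (H * D) - τ * B) := mul_nonneg hx (by linarith)
  have hhop : 0 ≤ τ * H * (F + D * x) := mul_nonneg (mul_nonneg hτ hH) (by linarith)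
  have hinflux : 0 ≤ τ * A * (1 - ρ) := mul_nonneg (mul_nonneg hτ hA) (by linarith)
  linarith

theorem inBox_eulerStep {a r a' r' Fa Fr τ H D Aa Ar Ba Br M : ℝ}
    (hbox : InBox a r) (hF : FluxBound D a r Fa Fr) (hτ : 0 ≤ τ) (hH : 0 ≤ H)
    (hAa : 0 ≤ Aa) (hAr : 0 ≤ Ar) (hBa : 0 ≤ Ba) (hBr : 0 ≤ Br)
    (hCFL : τ * (H * D) + τ * M ≤ 1) (hAM : Aa + Ar ≤ M) (hBaM : Ba ≤ M) (hBrM : Br ≤ M)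
    (ha' : a' = a + τ * (H * Fa + Aa * (1 - (a + r)) - Ba * a))
    (hr' : r' = r + τ * (H * Fr + Ar * (1 - (a + r)) - Br * r)) :
    InBox a' r' := by
  obtain ⟨ha, hr, hρ⟩ := hbox
  have hCFL_le {c : ℝ} (hc : c ≤ M) : τ * (H * D) + τ * c ≤ 1 := by
    linarith [mul_le_mul_of_nonneg_left hc hτ]
  have hCFLa := hCFL_le hBaM
  have hCFLr := hCFL_le hBrM
  have hCFLρ := hCFL_le hAM
  refine ⟨ha' ▸ eulerStep_nonneg ha hρ hF.neg_le_fst hτ hH hAa hCFLa,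
    hr' ▸ eulerStep_nonneg hr hρ hF.neg_le_snd hτ hH hAr hCFLr, ?_⟩
  have hkeep : 0 ≤ (1 - (a + r)) * (1 - τ * (H * D) - τ * (Aa + Ar)) :=
    mul_nonneg (by linarith) (by linarith)
  have hhop : 0 ≤ τ * H * (D * (1 - (a + r)) - (Fa + Fr)) :=
    mul_nonneg (mul_nonneg hτ hH) (by linarith [hF.add_le])
  have houtflux : 0 ≤ τ * (Ba * a + Br * r) := by positivity
  rw [ha', hr']
  linarith

/-- If the initial lattice states satisfy the box constraints
`0 ≤ a_i^0`, `0 ≤ r_i^0`, `a_i^0 + r_i^0 ≤ 1` for all sites `i = 1,…,N`, and the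
CFL-type condition `1 - 2τH·V_max - τ·max(2H·V_max, B_a, B_r, A_a, A_r) ≥ 0`
holds, then the states generated by the explicit Euler scheme satisfy the box
constraints at every time step `k` and every site `i = 1,…,N`. -/
theorem box_constraints_preserved
    (N : ℕ) (hN : 3 ≤ N)
    (τ H Vmax : ℝ) (hτ : 0 < τ) (hH : 0 ≤ H) (hVmax : 0 < Vmax)
    (Aa Ar Ba Br : ℝ) (hAa : 0 ≤ Aa) (hAr : 0 ≤ Ar) (hBa : 0 ≤ Ba) (hBr : 0 ≤ Br)
    (wa wr : ℕ → ℕ → ℝ)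
    (hwa_pos : ∀ i j : ℕ, (j = i + 1 ∨ i = j + 1) → 0 < wa i j)
    (hwr_pos : ∀ i j : ℕ, (j = i + 1 ∨ i = j + 1) → 0 < wr i j)
    (hwa_le : ∀ i j : ℕ, (j = i + 1 ∨ i = j + 1) → wa i j ≤ Vmax)
    (hwr_le : ∀ i j : ℕ, (j = i + 1 ∨ i = j + 1) → wr i j ≤ Vmax)
    (a r : ℕ → ℕ → ℝ)
    -- initial box constraints
    (ha0 : ∀ i : ℕ, 1 ≤ i → i ≤ N → 0 ≤ a 0 i)
    (hr0 : ∀ i : ℕ, 1 ≤ i → i ≤ N → 0 ≤ r 0 i)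
    (hrho0 : ∀ i : ℕ, 1 ≤ i → i ≤ N → a 0 i + r 0 i ≤ 1)
    -- explicit Euler update at interior sites
    (ha_upd : ∀ k : ℕ, ∀ i : ℕ, 2 ≤ i → i ≤ N - 1 →
      a (k + 1) i = a k i + τ * H *
        (-(a k i) * (1 - (a k (i - 1) + r k (i - 1))) * wa i (i - 1)
          + a k (i - 1) * (1 - (a k i + r k i)) * wa (i - 1) i
          - a k i * (1 - (a k (i + 1) + r k (i + 1))) * wa i (i + 1)
          + a k (i + 1) * (1 - (a k i + r k i)) * wa (i + 1) i))
    (hr_upd : ∀ k : ℕ, ∀ i : ℕ, 2 ≤ i → i ≤ N - 1 →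
      r (k + 1) i = r k i + τ * H *
        (-(r k i) * (1 - (a k (i - 1) + r k (i - 1))) * wr i (i - 1)
          + r k (i - 1) * (1 - (a k i + r k i)) * wr (i - 1) i
          - r k i * (1 - (a k (i + 1) + r k (i + 1))) * wr i (i + 1)
          + r k (i + 1) * (1 - (a k i + r k i)) * wr (i + 1) i))
    -- explicit Euler update at the boundary sites
    (ha1_upd : ∀ k : ℕ,
      a (k + 1) 1 = a k 1 + τ *
        (H * (-(a k 1) * (1 - (a k 2 + r k 2)) * wa 1 2
          + a k 2 * (1 - (a k 1 + r k 1)) * wa 2 1)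
          + Aa * (1 - (a k 1 + r k 1))))
    (haN_upd : ∀ k : ℕ,
      a (k + 1) N = a k N + τ *
        (H * (-(a k N) * (1 - (a k (N - 1) + r k (N - 1))) * wa N (N - 1)
          + a k (N - 1) * (1 - (a k N + r k N)) * wa (N - 1) N)
          - Ba * a k N))
    (hr1_upd : ∀ k : ℕ,
      r (k + 1) 1 = r k 1 + τ *
        (H * (-(r k 1) * (1 - (a k 2 + r k 2)) * wr 1 2
          + r k 2 * (1 - (a k 1 + r k 1)) * wr 2 1)
          - Br * r k 1))
    (hrN_upd : ∀ k : ℕ,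
      r (k + 1) N = r k N + τ *
        (H * (-(r k N) * (1 - (a k (N - 1) + r k (N - 1))) * wr N (N - 1)
          + r k (N - 1) * (1 - (a k N + r k N)) * wr (N - 1) N)
          + Ar * (1 - (a k N + r k N))))
    -- CFL-type condition
    (hCFL : 0 ≤ 1 - 2 * τ * H * Vmax
      - τ * max (2 * H * Vmax) (max Ba (max Br (max Aa Ar)))) :
    ∀ k : ℕ, ∀ i : ℕ, 1 ≤ i → i ≤ N →
      0 ≤ a k i ∧ 0 ≤ r k i ∧ a k i + r k i ≤ 1 := by
  set M := max (2 * H * Vmax) (max Ba (max Br (max Aa Ar)))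
  have hCFL' : τ * (H * (2 * Vmax)) + τ * M ≤ 1 := by linarith
  have hwa : ∀ i j, Adjacent i j → wa i j ∈ Set.Icc 0 Vmax :=
    fun i j h => ⟨(hwa_pos i j h).le, hwa_le i j h⟩
  have hwr : ∀ i j, Adjacent i j → wr i j ∈ Set.Icc 0 Vmax :=
    fun i j h => ⟨(hwr_pos i j h).le, hwr_le i j h⟩
  have hV : Vmax ≤ 2 * Vmax := by linarith
  intro k
  induction k with
  | zero => exact fun i h1 h2 => ⟨ha0 i h1 h2, hr0 i h1 h2, hrho0 i h1 h2⟩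
  | succ k ih =>
    intro i hi1 hiN
    have hF := fun j (hij : Adjacent i j) (hj1 : 1 ≤ j) (hjN : j ≤ N) =>
      fluxBound_hopFlux hwa hwr hij (ih i hi1 hiN) (ih j hj1 hjN)
    rcases (by omega : i = 1 ∨ i = N ∨ (2 ≤ i ∧ i ≤ N - 1)) with rfl | rfl | ⟨h2, h3⟩
    · refine inBox_eulerStep (ih 1 hi1 hiN) ((hF 2 (.inl rfl) (by omega) (by omega)).mono
        (ih 1 hi1 hiN) hV) hτ.le hH hAa le_rfl le_rfl hBr hCFL'
        (by simp [M]) (by simp [M, hBa]) (by simp [M]) ?_ ?_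
        <;> simp only [ha1_upd, hr1_upd, hopFlux, Pi.add_apply] <;> ring
    · refine inBox_eulerStep (ih i hi1 hiN) ((hF (i - 1) (.inr (by omega)) (by omega)
        (by omega)).mono (ih i hi1 hiN) hV) hτ.le hH le_rfl hAr hBa le_rfl
        hCFL' (by simp [M]) (by simp [M]) (by simp [M, hBa]) ?_ ?_
        <;> simp only [haN_upd, hrN_upd, hopFlux, Pi.add_apply] <;> ring
    · refine inBox_eulerStep (ih i hi1 hiN) (two_mul Vmax ▸
        (hF (i - 1) (.inr (by omega)) (by omega) (by omega)).add
        (hF (i + 1) (.inl rfl) (by omega) (by omega))) hτ.le hH le_rfl le_rfl le_rfl le_rfl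
        hCFL' (by simp [M, hBa]) (by simp [M, hBa]) (by simp [M, hBa]) ?_ ?_
        <;> simp only [ha_upd k i h2 h3, hr_upd k i h2 h3, hopFlux, Pi.add_apply] <;> ring
end

section
/- Suppose at time step k the lattice states satisfy 0 ≤ a_i^k, 0 ≤ r_i^k and a_i^k + r_i^k ≤ 1 for all sites i = 1,…,N. Then for every interior site i = 2,…,N−1 the explicit Euler update satisfies a_i^{k+1} ≥ (1 − 2τH·V_max)·a_i^k and r_i^{k+1} ≥ (1 − 2τH·V_max)·r_i^k; in particular, if 1 − 2τH·V_max ≥ 0 then a_i^{k+1} ≥ 0 and r_i^{k+1} ≥ 0 at all interior sites. -/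
/-!
Of the four hopping terms in the update of a species `x` at an interior site `i`, the two
that move mass into `i` are nonnegative, and each of the two that move mass out of `i` is at
most `τ H V_max x_i`, since the vacancy `1 - ρ` of the target site lies in `[0, 1]` and the
weights are at most `V_max`.
-/

lemma hop_outflux_le {x s w V : ℝ} (hx : 0 ≤ x) (hs : s ≤ 1) (hw₀ : 0 ≤ w) (hw : w ≤ V) :
    x * s * w ≤ x * V := by
  rw [mul_assoc]
  exact mul_le_mul_of_nonneg_left ((mul_le_of_le_one_left hw₀ hs).trans hw) hx

lemma hop_update_lower_bound {c V x₀ x₁ x₂ s₀ s₁ s₂ w₁₀ w₀₁ w₁₂ w₂₁ : ℝ} (hc : 0 ≤ c)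
    (hx₀ : 0 ≤ x₀) (hx₁ : 0 ≤ x₁) (hx₂ : 0 ≤ x₂) (hs₀ : s₀ ≤ 1) (hs₁ : 0 ≤ s₁) (hs₂ : s₂ ≤ 1)
    (hw₁₀ : 0 ≤ w₁₀) (hw₀₁ : 0 ≤ w₀₁) (hw₁₂ : 0 ≤ w₁₂) (hw₂₁ : 0 ≤ w₂₁)
    (hw₁₀V : w₁₀ ≤ V) (hw₁₂V : w₁₂ ≤ V) :
    (1 - 2 * c * V) * x₁ ≤
      x₁ + c * (-x₁ * s₀ * w₁₀ + x₀ * s₁ * w₀₁ - x₁ * s₂ * w₁₂ + x₂ * s₁ * w₂₁) := by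
  have hout₀ := hop_outflux_le hx₁ hs₀ hw₁₀ hw₁₀V
  have hout₂ := hop_outflux_le hx₁ hs₂ hw₁₂ hw₁₂V
  have hin₀ : 0 ≤ x₀ * s₁ * w₀₁ := by positivity
  have hin₂ : 0 ≤ x₂ * s₁ * w₂₁ := by positivity
  have hgain : 0 ≤ (x₁ * V - x₁ * s₀ * w₁₀) + (x₁ * V - x₁ * s₂ * w₁₂)
      + x₀ * s₁ * w₀₁ + x₂ * s₁ * w₂₁ := by linarith
  linear_combination mul_nonneg hc hgain

lemma interior_hop_update_lower_bound {N : ℕ} {τ H V : ℝ} (hτH : 0 ≤ τ * H)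
    {w : ℕ → ℕ → ℝ} (hw_nonneg : ∀ i j : ℕ, (j = i + 1 ∨ i = j + 1) → 0 ≤ w i j)
    (hw_le : ∀ i j : ℕ, (j = i + 1 ∨ i = j + 1) → w i j ≤ V)
    {x ρ : ℕ → ℝ} (hx : ∀ i : ℕ, 1 ≤ i → i ≤ N → 0 ≤ x i)
    (hρ_nonneg : ∀ i : ℕ, 1 ≤ i → i ≤ N → 0 ≤ ρ i) (hρ_le : ∀ i : ℕ, 1 ≤ i → i ≤ N → ρ i ≤ 1)
    {i : ℕ} (hi : 2 ≤ i) (hiN : i ≤ N - 1) :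
    (1 - 2 * τ * H * V) * x i ≤ x i + τ * H *
        (-(x i) * (1 - ρ (i - 1)) * w i (i - 1)
          + x (i - 1) * (1 - ρ i) * w (i - 1) i
          - x i * (1 - ρ (i + 1)) * w i (i + 1)
          + x (i + 1) * (1 - ρ i) * w (i + 1) i) := by
  have hleft : i = i - 1 + 1 := by omega
  rw [show 2 * τ * H * V = 2 * (τ * H) * V by ring]
  exact hop_update_lower_bound hτH (hx _ (by omega) (by omega)) (hx _ (by omega) (by omega))
    (hx _ (by omega) (by omega)) (by linarith [hρ_nonneg (i - 1) (by omega) (by omega)])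
    (by linarith [hρ_le i (by omega) (by omega)])
    (by linarith [hρ_nonneg (i + 1) (by omega) (by omega)])
    (hw_nonneg _ _ (.inr hleft)) (hw_nonneg _ _ (.inl hleft)) (hw_nonneg _ _ (.inl rfl))
    (hw_nonneg _ _ (.inr rfl)) (hw_le _ _ (.inr hleft)) (hw_le _ _ (.inl rfl))

theorem interior_positivity_bound_general
    (N : ℕ)
    (τ H Vmax : ℝ) (hτ : 0 < τ) (hH : 0 ≤ H)
    (wa wr : ℕ → ℕ → ℝ)
    (hwa_pos : ∀ i j : ℕ, (j = i + 1 ∨ i = j + 1) → 0 < wa i j)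
    (hwr_pos : ∀ i j : ℕ, (j = i + 1 ∨ i = j + 1) → 0 < wr i j)
    (hwa_le : ∀ i j : ℕ, (j = i + 1 ∨ i = j + 1) → wa i j ≤ Vmax)
    (hwr_le : ∀ i j : ℕ, (j = i + 1 ∨ i = j + 1) → wr i j ≤ Vmax)
    (a r a' r' : ℕ → ℝ)
    (ha_nonneg : ∀ i : ℕ, 1 ≤ i → i ≤ N → 0 ≤ a i)
    (hr_nonneg : ∀ i : ℕ, 1 ≤ i → i ≤ N → 0 ≤ r i)
    (hrho_le : ∀ i : ℕ, 1 ≤ i → i ≤ N → a i + r i ≤ 1)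
    (ha_upd : ∀ i : ℕ, 2 ≤ i → i ≤ N - 1 →
      a' i = a i + τ * H *
        (-(a i) * (1 - (a (i - 1) + r (i - 1))) * wa i (i - 1)
          + a (i - 1) * (1 - (a i + r i)) * wa (i - 1) i
          - a i * (1 - (a (i + 1) + r (i + 1))) * wa i (i + 1)
          + a (i + 1) * (1 - (a i + r i)) * wa (i + 1) i))
    (hr_upd : ∀ i : ℕ, 2 ≤ i → i ≤ N - 1 →
      r' i = r i + τ * H *
        (-(r i) * (1 - (a (i - 1) + r (i - 1))) * wr i (i - 1)
          + r (i - 1) * (1 - (a i + r i)) * wr (i - 1) i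
          - r i * (1 - (a (i + 1) + r (i + 1))) * wr i (i + 1)
          + r (i + 1) * (1 - (a i + r i)) * wr (i + 1) i)) :
    ∀ i : ℕ, 2 ≤ i → i ≤ N - 1 →
      ((1 - 2 * τ * H * Vmax) * a i ≤ a' i ∧
        (1 - 2 * τ * H * Vmax) * r i ≤ r' i) ∧
      (0 ≤ 1 - 2 * τ * H * Vmax → 0 ≤ a' i ∧ 0 ≤ r' i) := by
  intro i hi hiN
  have hτH : 0 ≤ τ * H := mul_nonneg hτ.le hH
  have hρ_nonneg : ∀ j : ℕ, 1 ≤ j → j ≤ N → 0 ≤ a j + r j := fun j h₁ h₂ =>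
    add_nonneg (ha_nonneg j h₁ h₂) (hr_nonneg j h₁ h₂)
  have ha : (1 - 2 * τ * H * Vmax) * a i ≤ a' i := by
    rw [ha_upd i hi hiN]
    exact interior_hop_update_lower_bound (ρ := fun j => a j + r j) hτH
      (fun j k h => (hwa_pos j k h).le) hwa_le ha_nonneg hρ_nonneg hrho_le hi hiN
  have hr : (1 - 2 * τ * H * Vmax) * r i ≤ r' i := by
    rw [hr_upd i hi hiN]
    exact interior_hop_update_lower_bound (ρ := fun j => a j + r j) hτH
      (fun j k h => (hwr_pos j k h).le) hwr_le hr_nonneg hρ_nonneg hrho_le hi hiN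
  refine ⟨⟨ha, hr⟩, fun hc => ⟨?_, ?_⟩⟩
  · exact (mul_nonneg hc (ha_nonneg i (by omega) (by omega))).trans ha
  · exact (mul_nonneg hc (hr_nonneg i (by omega) (by omega))).trans hr

/-- Under the box constraints at time step `k`, the explicit Euler
update of the lattice vesicle-transport scheme satisfies, at every interior site
`i = 2,…,N-1`, the lower bounds `a_i^{k+1} ≥ (1 - 2τH·V_max)·a_i^k` and
`r_i^{k+1} ≥ (1 - 2τH·V_max)·r_i^k`; in particular nonnegativity is preserved at
interior sites whenever `1 - 2τH·V_max ≥ 0`. -/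
theorem interior_positivity_bound
    (N : ℕ) (hN : 3 ≤ N)
    (τ H Vmax : ℝ) (hτ : 0 < τ) (hH : 0 ≤ H) (hVmax : 0 < Vmax)
    (wa wr : ℕ → ℕ → ℝ)
    (hwa_pos : ∀ i j : ℕ, (j = i + 1 ∨ i = j + 1) → 0 < wa i j)
    (hwr_pos : ∀ i j : ℕ, (j = i + 1 ∨ i = j + 1) → 0 < wr i j)
    (hwa_le : ∀ i j : ℕ, (j = i + 1 ∨ i = j + 1) → wa i j ≤ Vmax)
    (hwr_le : ∀ i j : ℕ, (j = i + 1 ∨ i = j + 1) → wr i j ≤ Vmax)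
    (a r a' r' : ℕ → ℝ)
    (ha_nonneg : ∀ i : ℕ, 1 ≤ i → i ≤ N → 0 ≤ a i)
    (hr_nonneg : ∀ i : ℕ, 1 ≤ i → i ≤ N → 0 ≤ r i)
    (hrho_le : ∀ i : ℕ, 1 ≤ i → i ≤ N → a i + r i ≤ 1)
    (ha_upd : ∀ i : ℕ, 2 ≤ i → i ≤ N - 1 →
      a' i = a i + τ * H *
        (-(a i) * (1 - (a (i - 1) + r (i - 1))) * wa i (i - 1)
          + a (i - 1) * (1 - (a i + r i)) * wa (i - 1) i
          - a i * (1 - (a (i + 1) + r (i + 1))) * wa i (i + 1)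
          + a (i + 1) * (1 - (a i + r i)) * wa (i + 1) i))
    (hr_upd : ∀ i : ℕ, 2 ≤ i → i ≤ N - 1 →
      r' i = r i + τ * H *
        (-(r i) * (1 - (a (i - 1) + r (i - 1))) * wr i (i - 1)
          + r (i - 1) * (1 - (a i + r i)) * wr (i - 1) i
          - r i * (1 - (a (i + 1) + r (i + 1))) * wr i (i + 1)
          + r (i + 1) * (1 - (a i + r i)) * wr (i + 1) i)) :
    ∀ i : ℕ, 2 ≤ i → i ≤ N - 1 →
      ((1 - 2 * τ * H * Vmax) * a i ≤ a' i ∧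
        (1 - 2 * τ * H * Vmax) * r i ≤ r' i) ∧
      (0 ≤ 1 - 2 * τ * H * Vmax → 0 ≤ a' i ∧ 0 ≤ r' i) :=
  interior_positivity_bound_general N τ H Vmax hτ hH wa wr hwa_pos hwr_pos hwa_le hwr_le a r a' r'
    ha_nonneg hr_nonneg hrho_le ha_upd hr_upd
end

section
/- Suppose at time step k the lattice states satisfy 0 ≤ a_i^k, 0 ≤ r_i^k and a_i^k + r_i^k ≤ 1 for all sites i = 1,…,N. Then the explicit Euler update at the boundary sites with inflow satisfies 1 − ρ_1^{k+1} ≥ (1 − 2τH·V_max − τA_a)·(1 − ρ_1^k) and 1 − ρ_N^{k+1} ≥ (1 − 2τH·V_max − τA_r)·(1 − ρ_N^k), where ρ_i^k := a_i^k + r_i^k; in particular, if 1 − 2τH·V_max − τ·max(A_a, A_r) ≥ 0 then ρ_1^{k+1} ≤ 1 and ρ_N^{k+1} ≤ 1. -/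
/-!
Write `ρ = p + q` for the density at a boundary site, where `p` is the species with inflow rate `A`
and `q` the species with outflow rate `B`, and `ρₙ = pₙ + qₙ` for the neighbour. Expanding the
update gives
`1 - ρ' = (1 - ρ)(1 - τA - τH(pₙ w_p + qₙ w_q)) + τH(1 - ρₙ)(p w_p' + q w_q') + τBq`.
The last two terms are nonnegative, and the hopping term `pₙ w_p + qₙ w_q` is at most `V` because
`pₙ + qₙ ≤ 1`, so `1 - ρ' ≥ (1 - τHV - τA)(1 - ρ)`.
-/

lemma mul_add_mul_le_of_add_le_one {x y u v V : ℝ} (hx : 0 ≤ x) (hy : 0 ≤ y) (hxy : x + y ≤ 1)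
    (hu : u ≤ V) (hv : v ≤ V) (hV : 0 ≤ V) : x * u + y * v ≤ V :=
  calc x * u + y * v ≤ x * V + y * V := by gcongr
    _ = (x + y) * V := by ring
    _ ≤ V := mul_le_of_le_one_left hV hxy

lemma inflow_site_vacancy_ge {τ H V A B p q pₙ qₙ ρ ρₙ wpIn wqIn wpOut wqOut p' q' : ℝ}
    (hτ : 0 ≤ τ) (hH : 0 ≤ H) (hV : 0 ≤ V) (hB : 0 ≤ B)
    (hp : 0 ≤ p) (hq : 0 ≤ q) (hpₙ : 0 ≤ pₙ) (hqₙ : 0 ≤ qₙ)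
    (hρ : p + q = ρ) (hρₙ : pₙ + qₙ = ρₙ) (hρ1 : ρ ≤ 1) (hρₙ1 : ρₙ ≤ 1)
    (hwpIn : wpIn ≤ V) (hwqIn : wqIn ≤ V) (hwpOut : 0 ≤ wpOut) (hwqOut : 0 ≤ wqOut)
    (hp' : p' = p + τ * (H * (-p * (1 - ρₙ) * wpOut + pₙ * (1 - ρ) * wpIn) + A * (1 - ρ)))
    (hq' : q' = q + τ * (H * (-q * (1 - ρₙ) * wqOut + qₙ * (1 - ρ) * wqIn) - B * q)) :
    (1 - τ * H * V - τ * A) * (1 - ρ) ≤ 1 - (p' + q') := by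
  have hvacancy : 1 - (p' + q') = (1 - τ * A - τ * H * (pₙ * wpIn + qₙ * wqIn)) * (1 - ρ)
      + τ * H * ((1 - ρₙ) * (p * wpOut + q * wqOut)) + τ * (B * q) := by
    subst hp' hq' hρ; ring
  have hτH : 0 ≤ τ * H := mul_nonneg hτ hH
  have hinflow : 1 - τ * H * V - τ * A ≤ 1 - τ * A - τ * H * (pₙ * wpIn + qₙ * wqIn) := by
    have := mul_add_mul_le_of_add_le_one hpₙ hqₙ (hρₙ ▸ hρₙ1) hwpIn hwqIn hV
    linarith [mul_le_mul_of_nonneg_left this hτH]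
  have houtflow : 0 ≤ τ * H * ((1 - ρₙ) * (p * wpOut + q * wqOut)) :=
    mul_nonneg hτH (mul_nonneg (sub_nonneg.2 hρₙ1)
      (add_nonneg (mul_nonneg hp hwpOut) (mul_nonneg hq hwqOut)))
  have hBq : 0 ≤ τ * (B * q) := by positivity
  linarith [mul_le_mul_of_nonneg_right hinflow (sub_nonneg.2 hρ1)]

lemma le_one_of_mul_one_sub_le {c ρ ρ' : ℝ} (hc : 0 ≤ c) (hρ : ρ ≤ 1)
    (h : c * (1 - ρ) ≤ 1 - ρ') : ρ' ≤ 1 := by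
  linarith [mul_nonneg hc (sub_nonneg.2 hρ)]

theorem inflow_boundary_density_bound_general
    (N : ℕ) (hN : 3 ≤ N)
    (τ H Vmax : ℝ) (hτ : 0 < τ) (hH : 0 ≤ H) (hVmax : 0 < Vmax)
    (Aa Ar Ba Br : ℝ) (hBa : 0 ≤ Ba) (hBr : 0 ≤ Br)
    (wa wr : ℕ → ℕ → ℝ)
    (hwa_pos : ∀ i j : ℕ, (j = i + 1 ∨ i = j + 1) → 0 < wa i j)
    (hwr_pos : ∀ i j : ℕ, (j = i + 1 ∨ i = j + 1) → 0 < wr i j)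
    (hwa_le : ∀ i j : ℕ, (j = i + 1 ∨ i = j + 1) → wa i j ≤ Vmax)
    (hwr_le : ∀ i j : ℕ, (j = i + 1 ∨ i = j + 1) → wr i j ≤ Vmax)
    (a r a' r' : ℕ → ℝ)
    (ha_nonneg : ∀ i : ℕ, 1 ≤ i → i ≤ N → 0 ≤ a i)
    (hr_nonneg : ∀ i : ℕ, 1 ≤ i → i ≤ N → 0 ≤ r i)
    (hrho_le : ∀ i : ℕ, 1 ≤ i → i ≤ N → a i + r i ≤ 1)
    (ha1_upd :
      a' 1 = a 1 + τ *
        (H * (-(a 1) * (1 - (a 2 + r 2)) * wa 1 2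
          + a 2 * (1 - (a 1 + r 1)) * wa 2 1)
          + Aa * (1 - (a 1 + r 1))))
    (haN_upd :
      a' N = a N + τ *
        (H * (-(a N) * (1 - (a (N - 1) + r (N - 1))) * wa N (N - 1)
          + a (N - 1) * (1 - (a N + r N)) * wa (N - 1) N)
          - Ba * a N))
    (hr1_upd :
      r' 1 = r 1 + τ *
        (H * (-(r 1) * (1 - (a 2 + r 2)) * wr 1 2
          + r 2 * (1 - (a 1 + r 1)) * wr 2 1)
          - Br * r 1))
    (hrN_upd :
      r' N = r N + τ *
        (H * (-(r N) * (1 - (a (N - 1) + r (N - 1))) * wr N (N - 1)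
          + r (N - 1) * (1 - (a N + r N)) * wr (N - 1) N)
          + Ar * (1 - (a N + r N)))) :
    ((1 - 2 * τ * H * Vmax - τ * Aa) * (1 - (a 1 + r 1)) ≤ 1 - (a' 1 + r' 1) ∧
      (1 - 2 * τ * H * Vmax - τ * Ar) * (1 - (a N + r N)) ≤ 1 - (a' N + r' N)) ∧
    (0 ≤ 1 - 2 * τ * H * Vmax - τ * max Aa Ar →
      a' 1 + r' 1 ≤ 1 ∧ a' N + r' N ≤ 1) := by
  have hN1 : N = N - 1 + 1 := by omega
  have hρ1 := hrho_le 1 le_rfl (by omega)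
  have hρN := hrho_le N (by omega) le_rfl
  have site1 := inflow_site_vacancy_ge hτ.le hH hVmax.le hBr
    (ha_nonneg 1 le_rfl (by omega)) (hr_nonneg 1 le_rfl (by omega))
    (ha_nonneg 2 (by omega) (by omega)) (hr_nonneg 2 (by omega) (by omega))
    rfl rfl hρ1 (hrho_le 2 (by omega) (by omega))
    (hwa_le 2 1 (Or.inr rfl)) (hwr_le 2 1 (Or.inr rfl))
    (hwa_pos 1 2 (Or.inl rfl)).le (hwr_pos 1 2 (Or.inl rfl)).le ha1_upd hr1_upd
  -- at site `N` the inflowing species is `r`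
  have siteN := inflow_site_vacancy_ge hτ.le hH hVmax.le hBa
    (hr_nonneg N (by omega) le_rfl) (ha_nonneg N (by omega) le_rfl)
    (hr_nonneg (N - 1) (by omega) (by omega)) (ha_nonneg (N - 1) (by omega) (by omega))
    (add_comm _ _) (add_comm _ _) hρN (hrho_le (N - 1) (by omega) (by omega))
    (hwr_le (N - 1) N (Or.inl hN1)) (hwa_le (N - 1) N (Or.inl hN1))
    (hwr_pos N (N - 1) (Or.inr hN1)).le (hwa_pos N (N - 1) (Or.inr hN1)).le hrN_upd haN_upd
  rw [add_comm (r' N)] at siteN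
  have hweaken : ∀ A ρ : ℝ, ρ ≤ 1 →
      (1 - 2 * τ * H * Vmax - τ * A) * (1 - ρ) ≤ (1 - τ * H * Vmax - τ * A) * (1 - ρ) :=
    fun _ _ hρ => mul_le_mul_of_nonneg_right
      (by linarith [show 0 ≤ τ * H * Vmax by positivity]) (sub_nonneg.2 hρ)
  have vacancy1 := (hweaken _ _ hρ1).trans site1
  have vacancyN := (hweaken _ _ hρN).trans siteN
  refine ⟨⟨vacancy1, vacancyN⟩, fun hc => ⟨le_one_of_mul_one_sub_le ?_ hρ1 vacancy1,
    le_one_of_mul_one_sub_le ?_ hρN vacancyN⟩⟩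
  · linarith [mul_le_mul_of_nonneg_left (le_max_left Aa Ar) hτ.le]
  · linarith [mul_le_mul_of_nonneg_left (le_max_right Aa Ar) hτ.le]

/-- Under the box constraints at time step `k`, the explicit Euler
update at the boundary sites with inflow satisfies
`1 - ρ_1^{k+1} ≥ (1 - 2τH·V_max - τA_a)·(1 - ρ_1^k)` and
`1 - ρ_N^{k+1} ≥ (1 - 2τH·V_max - τA_r)·(1 - ρ_N^k)` where `ρ_i = a_i + r_i`;
in particular, if `1 - 2τH·V_max - τ·max(A_a, A_r) ≥ 0` then `ρ_1^{k+1} ≤ 1`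
and `ρ_N^{k+1} ≤ 1`. -/
theorem inflow_boundary_density_bound
    (N : ℕ) (hN : 3 ≤ N)
    (τ H Vmax : ℝ) (hτ : 0 < τ) (hH : 0 ≤ H) (hVmax : 0 < Vmax)
    (Aa Ar Ba Br : ℝ) (hAa : 0 ≤ Aa) (hAr : 0 ≤ Ar) (hBa : 0 ≤ Ba) (hBr : 0 ≤ Br)
    (wa wr : ℕ → ℕ → ℝ)
    (hwa_pos : ∀ i j : ℕ, (j = i + 1 ∨ i = j + 1) → 0 < wa i j)
    (hwr_pos : ∀ i j : ℕ, (j = i + 1 ∨ i = j + 1) → 0 < wr i j)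
    (hwa_le : ∀ i j : ℕ, (j = i + 1 ∨ i = j + 1) → wa i j ≤ Vmax)
    (hwr_le : ∀ i j : ℕ, (j = i + 1 ∨ i = j + 1) → wr i j ≤ Vmax)
    (a r a' r' : ℕ → ℝ)
    (ha_nonneg : ∀ i : ℕ, 1 ≤ i → i ≤ N → 0 ≤ a i)
    (hr_nonneg : ∀ i : ℕ, 1 ≤ i → i ≤ N → 0 ≤ r i)
    (hrho_le : ∀ i : ℕ, 1 ≤ i → i ≤ N → a i + r i ≤ 1)
    (ha1_upd :
      a' 1 = a 1 + τ *
        (H * (-(a 1) * (1 - (a 2 + r 2)) * wa 1 2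
          + a 2 * (1 - (a 1 + r 1)) * wa 2 1)
          + Aa * (1 - (a 1 + r 1))))
    (haN_upd :
      a' N = a N + τ *
        (H * (-(a N) * (1 - (a (N - 1) + r (N - 1))) * wa N (N - 1)
          + a (N - 1) * (1 - (a N + r N)) * wa (N - 1) N)
          - Ba * a N))
    (hr1_upd :
      r' 1 = r 1 + τ *
        (H * (-(r 1) * (1 - (a 2 + r 2)) * wr 1 2
          + r 2 * (1 - (a 1 + r 1)) * wr 2 1)
          - Br * r 1))
    (hrN_upd :
      r' N = r N + τ *
        (H * (-(r N) * (1 - (a (N - 1) + r (N - 1))) * wr N (N - 1)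
          + r (N - 1) * (1 - (a N + r N)) * wr (N - 1) N)
          + Ar * (1 - (a N + r N)))) :
    ((1 - 2 * τ * H * Vmax - τ * Aa) * (1 - (a 1 + r 1)) ≤ 1 - (a' 1 + r' 1) ∧
      (1 - 2 * τ * H * Vmax - τ * Ar) * (1 - (a N + r N)) ≤ 1 - (a' N + r' N)) ∧
    (0 ≤ 1 - 2 * τ * H * Vmax - τ * max Aa Ar →
      a' 1 + r' 1 ≤ 1 ∧ a' N + r' N ≤ 1) :=
  inflow_boundary_density_bound_general N hN τ H Vmax hτ hH hVmax Aa Ar Ba Br hBa hBr wa wr hwa_pos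
    hwr_pos hwa_le hwr_le a r a' r' ha_nonneg hr_nonneg hrho_le ha1_upd haN_upd hr1_upd hrN_upd
end

section
/- For any lattice states a^k, r^k : {1,…,N} → ℝ (no sign or density constraints required), the hopping contributions of the explicit Euler scheme cancel in the total lattice sums: Σ_{i=1}^N a_i^{k+1} = Σ_{i=1}^N a_i^k + τ·(A_a(1−ρ_1^k) − B_a a_N^k) and Σ_{i=1}^N r_i^{k+1} = Σ_{i=1}^N r_i^k + τ·(A_r(1−ρ_N^k) − B_r r_1^k), i.e. the total lattice mass changes only through the boundary influx and outflux terms. -/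
/-!
Each hopping term of the scheme is the flux of a species across one bond `(i, i + 1)`: it enters
the update of site `i` with one sign and the update of site `i + 1` with the other. Summed over the
lattice, these fluxes telescope away, and only the influx and outflux at the two ends remain.
-/

open Finset

theorem Finset.sum_Icc_eq_add_of_flux {M : Type*} [AddCommGroup M] {N : ℕ} (hN : 2 ≤ N)
    {d J : ℕ → M} {s t : M} (h₁ : d 1 = s - J 1) (h_N : d N = J (N - 1) + t)
    (h_int : ∀ i, 2 ≤ i → i ≤ N - 1 → d i = J (i - 1) - J i) :
    ∑ i ∈ Icc 1 N, d i = s + t := by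
  obtain ⟨n, rfl⟩ : ∃ n, N = n + 2 := ⟨N - 2, by omega⟩
  have h_interior : ∑ i ∈ Ico 2 (n + 2), d i = J 1 - J (n + 1) := by
    calc ∑ i ∈ Ico 2 (n + 2), d i
        = ∑ i ∈ Ico 1 (n + 1), d (i + 1) := (sum_Ico_add' d 1 (n + 1) 1).symm
      _ = -∑ i ∈ Ico 1 (n + 1), (J (i + 1) - J i) := by
          rw [← sum_neg_distrib]
          refine sum_congr rfl fun i hi ↦ ?_
          rw [mem_Ico] at hi
          rw [h_int (i + 1) (by omega) (by omega), Nat.add_sub_cancel, neg_sub]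
      _ = J 1 - J (n + 1) := by rw [sum_Ico_sub _ (by omega), neg_sub]
  calc ∑ i ∈ Icc 1 (n + 2), d i = d 1 + ∑ i ∈ Ico 2 (n + 2), d i + d (n + 2) := by
        rw [sum_Icc_succ_top (by omega), ← Ico_add_one_right_eq_Icc,
          sum_eq_sum_Ico_succ_bot (by omega)]
        rfl
    _ = s + t := by
        rw [h_interior, h₁, h_N, show n + 2 - 1 = n + 1 from rfl]
        abel

def hoppingFlux (H : ℝ) (w : ℕ → ℕ → ℝ) (ρ q : ℕ → ℝ) (i : ℕ) : ℝ :=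
  H * (q i * (1 - ρ (i + 1)) * w i (i + 1) - q (i + 1) * (1 - ρ i) * w (i + 1) i)

theorem sum_Icc_euler_step {N : ℕ} (hN : 2 ≤ N) {τ H s t : ℝ} {w : ℕ → ℕ → ℝ}
    {ρ q q' : ℕ → ℝ}
    (h_int : ∀ i : ℕ, 2 ≤ i → i ≤ N - 1 →
      q' i = q i + τ * H *
        (-(q i) * (1 - ρ (i - 1)) * w i (i - 1)
          + q (i - 1) * (1 - ρ i) * w (i - 1) i
          - q i * (1 - ρ (i + 1)) * w i (i + 1)
          + q (i + 1) * (1 - ρ i) * w (i + 1) i))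
    (h₁ : q' 1 = q 1 + τ * (s - hoppingFlux H w ρ q 1))
    (h_N : q' N = q N + τ * (hoppingFlux H w ρ q (N - 1) + t)) :
    ∑ i ∈ Icc 1 N, q' i = ∑ i ∈ Icc 1 N, q i + τ * (s + t) := by
  have h_incr : ∑ i ∈ Icc 1 N, (q' i - q i) = τ * s + τ * t := by
    refine sum_Icc_eq_add_of_flux hN (J := fun i ↦ τ * hoppingFlux H w ρ q i)
      (by rw [h₁]; ring) (by rw [h_N]; ring) fun i hi₂ hiN ↦ ?_
    have hi : i - 1 + 1 = i := Nat.sub_add_cancel (by omega)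
    simp only [hoppingFlux, hi]
    rw [h_int i hi₂ hiN]
    ring
  rw [sum_sub_distrib] at h_incr
  linarith

theorem lattice_mass_balance_general
    (N : ℕ) (hN : 3 ≤ N)
    (τ H : ℝ)
    (Aa Ar Ba Br : ℝ)
    (wa wr : ℕ → ℕ → ℝ)
    (a r a' r' : ℕ → ℝ)
    (ha_upd : ∀ i : ℕ, 2 ≤ i → i ≤ N - 1 →
      a' i = a i + τ * H *
        (-(a i) * (1 - (a (i - 1) + r (i - 1))) * wa i (i - 1)
          + a (i - 1) * (1 - (a i + r i)) * wa (i - 1) i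
          - a i * (1 - (a (i + 1) + r (i + 1))) * wa i (i + 1)
          + a (i + 1) * (1 - (a i + r i)) * wa (i + 1) i))
    (hr_upd : ∀ i : ℕ, 2 ≤ i → i ≤ N - 1 →
      r' i = r i + τ * H *
        (-(r i) * (1 - (a (i - 1) + r (i - 1))) * wr i (i - 1)
          + r (i - 1) * (1 - (a i + r i)) * wr (i - 1) i
          - r i * (1 - (a (i + 1) + r (i + 1))) * wr i (i + 1)
          + r (i + 1) * (1 - (a i + r i)) * wr (i + 1) i))
    (ha1_upd :
      a' 1 = a 1 + τ *
        (H * (-(a 1) * (1 - (a 2 + r 2)) * wa 1 2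
          + a 2 * (1 - (a 1 + r 1)) * wa 2 1)
          + Aa * (1 - (a 1 + r 1))))
    (haN_upd :
      a' N = a N + τ *
        (H * (-(a N) * (1 - (a (N - 1) + r (N - 1))) * wa N (N - 1)
          + a (N - 1) * (1 - (a N + r N)) * wa (N - 1) N)
          - Ba * a N))
    (hr1_upd :
      r' 1 = r 1 + τ *
        (H * (-(r 1) * (1 - (a 2 + r 2)) * wr 1 2
          + r 2 * (1 - (a 1 + r 1)) * wr 2 1)
          - Br * r 1))
    (hrN_upd :
      r' N = r N + τ *
        (H * (-(r N) * (1 - (a (N - 1) + r (N - 1))) * wr N (N - 1)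
          + r (N - 1) * (1 - (a N + r N)) * wr (N - 1) N)
          + Ar * (1 - (a N + r N)))) :
    (∑ i ∈ Finset.Icc 1 N, a' i) =
      (∑ i ∈ Finset.Icc 1 N, a i) + τ * (Aa * (1 - (a 1 + r 1)) - Ba * a N) ∧
    (∑ i ∈ Finset.Icc 1 N, r' i) =
      (∑ i ∈ Finset.Icc 1 N, r i) + τ * (Ar * (1 - (a N + r N)) - Br * r 1) := by
  have hN' : N - 1 + 1 = N := Nat.sub_add_cancel (by omega)
  constructor
  · rw [sum_Icc_euler_step (ρ := fun i ↦ a i + r i) (s := Aa * (1 - (a 1 + r 1)))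
      (t := -(Ba * a N)) (by omega) ha_upd (by simp only [ha1_upd, hoppingFlux]; ring)
      (by simp only [haN_upd, hoppingFlux, hN']; ring)]
    ring
  · rw [sum_Icc_euler_step (ρ := fun i ↦ a i + r i) (s := -(Br * r 1))
      (t := Ar * (1 - (a N + r N))) (by omega) hr_upd (by simp only [hr1_upd, hoppingFlux]; ring)
      (by simp only [hrN_upd, hoppingFlux, hN']; ring)]
    ring

/-- For arbitrary lattice states (no sign or density constraints),
the hopping contributions of the explicit Euler scheme cancel in the total
lattice sums, so that the total lattice mass of each species changes only
through the boundary influx and outflux terms. -/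
theorem lattice_mass_balance
    (N : ℕ) (hN : 3 ≤ N)
    (τ H : ℝ) (hτ : 0 < τ) (hH : 0 ≤ H)
    (Aa Ar Ba Br : ℝ) (hAa : 0 ≤ Aa) (hAr : 0 ≤ Ar) (hBa : 0 ≤ Ba) (hBr : 0 ≤ Br)
    (wa wr : ℕ → ℕ → ℝ)
    (hwa_pos : ∀ i j : ℕ, (j = i + 1 ∨ i = j + 1) → 0 < wa i j)
    (hwr_pos : ∀ i j : ℕ, (j = i + 1 ∨ i = j + 1) → 0 < wr i j)
    (a r a' r' : ℕ → ℝ)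
    (ha_upd : ∀ i : ℕ, 2 ≤ i → i ≤ N - 1 →
      a' i = a i + τ * H *
        (-(a i) * (1 - (a (i - 1) + r (i - 1))) * wa i (i - 1)
          + a (i - 1) * (1 - (a i + r i)) * wa (i - 1) i
          - a i * (1 - (a (i + 1) + r (i + 1))) * wa i (i + 1)
          + a (i + 1) * (1 - (a i + r i)) * wa (i + 1) i))
    (hr_upd : ∀ i : ℕ, 2 ≤ i → i ≤ N - 1 →
      r' i = r i + τ * H *
        (-(r i) * (1 - (a (i - 1) + r (i - 1))) * wr i (i - 1)
          + r (i - 1) * (1 - (a i + r i)) * wr (i - 1) i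
          - r i * (1 - (a (i + 1) + r (i + 1))) * wr i (i + 1)
          + r (i + 1) * (1 - (a i + r i)) * wr (i + 1) i))
    (ha1_upd :
      a' 1 = a 1 + τ *
        (H * (-(a 1) * (1 - (a 2 + r 2)) * wa 1 2
          + a 2 * (1 - (a 1 + r 1)) * wa 2 1)
          + Aa * (1 - (a 1 + r 1))))
    (haN_upd :
      a' N = a N + τ *
        (H * (-(a N) * (1 - (a (N - 1) + r (N - 1))) * wa N (N - 1)
          + a (N - 1) * (1 - (a N + r N)) * wa (N - 1) N)
          - Ba * a N))
    (hr1_upd :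
      r' 1 = r 1 + τ *
        (H * (-(r 1) * (1 - (a 2 + r 2)) * wr 1 2
          + r 2 * (1 - (a 1 + r 1)) * wr 2 1)
          - Br * r 1))
    (hrN_upd :
      r' N = r N + τ *
        (H * (-(r N) * (1 - (a (N - 1) + r (N - 1))) * wr N (N - 1)
          + r (N - 1) * (1 - (a N + r N)) * wr (N - 1) N)
          + Ar * (1 - (a N + r N)))) :
    (∑ i ∈ Finset.Icc 1 N, a' i) =
      (∑ i ∈ Finset.Icc 1 N, a i) + τ * (Aa * (1 - (a 1 + r 1)) - Ba * a N) ∧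
    (∑ i ∈ Finset.Icc 1 N, r' i) =
      (∑ i ∈ Finset.Icc 1 N, r i) + τ * (Ar * (1 - (a N + r N)) - Br * r 1) :=
  lattice_mass_balance_general N hN τ H Aa Ar Ba Br wa wr a r a' r' ha_upd hr_upd ha1_upd haN_upd
    hr1_upd hrN_upd
end

section
/- Let c ∈ ℝ and let a, r, V : ℝ → ℝ be twice continuously differentiable; set ρ := a + r. For x ∈ ℝ and h > 0 define the lattice hopping operator F_h(x) := −a(x)(1−ρ(x−h))·exp(−c(V(x)−V(x−h))) + a(x−h)(1−ρ(x))·exp(−c(V(x−h)−V(x))) − a(x)(1−ρ(x+h))·exp(−c(V(x)−V(x+h))) + a(x+h)(1−ρ(x))·exp(−c(V(x+h)−V(x))). Then as h → 0⁺, F_h(x)/h² converges to (1−ρ(x))·a''(x) + a(x)·ρ''(x) − 2c·(a'(x)(1−ρ(x))V'(x) − a(x)ρ'(x)V'(x) + a(x)(1−ρ(x))V''(x)); that is, the discrete lattice dynamics are consistent with a nonlinear cross-diffusion–drift operator in divergence form. -/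
/-!
With `Δ²ₕ f(x) = f(x + h) + f(x - h) - 2 f(x)`, the numerator is
`-a(x) Δ²ₕ P(x) + (1 - ρ(x)) Δ²ₕ Q(x)` for `P y = (1 - ρ y) e^{c (V y - V x)}` and
`Q y = a y e^{-c (V y - V x)}`: the `-2 f(x)` terms cancel because `P x = 1 - ρ x` and `Q x = a x`.
For `C²` functions `Δ²ₕ f(x) / h² → f''(x)` (one application of L'Hôpital reduces this to the
symmetric difference quotient of `f'`), and `(u e^W)'' = (u'' + 2 u' W' + u (W'² + W'')) e^W`.
Evaluating at `x`, where `W = 0`, the terms in `c²` cancel and the drift-diffusion operator remains.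
-/

open Filter Topology Real

theorem tendsto_symmetric_second_difference {f : ℝ → ℝ} {x : ℝ} (hf : Differentiable ℝ f)
    (hf' : DifferentiableAt ℝ (deriv f) x) :
    Tendsto (fun h => (f (x + h) + f (x - h) - 2 * f x) / h ^ 2) (𝓝[>] 0)
      (𝓝 (deriv (deriv f) x)) := by
  have hnum : ∀ h : ℝ, HasDerivAt (fun h => f (x + h) + f (x - h) - 2 * f x)
      (deriv f (x + h) - deriv f (x - h)) h := by
    intro h
    have hplus := (hf (x + h)).hasDerivAt.comp h ((hasDerivAt_id h).const_add x)
    have hminus := (hf (x - h)).hasDerivAt.comp h ((hasDerivAt_id h).const_sub x)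
    simpa [Function.comp_def, sub_eq_add_neg] using (hplus.add hminus).sub_const (2 * f x)
  have hden : ∀ h : ℝ, HasDerivAt (fun h : ℝ => h ^ 2) (2 * h) h := fun h => by
    simpa using hasDerivAt_pow 2 h
  have hslope := hf'.hasDerivAt.tendsto_slope_zero_right
  have hslope_left := hf'.hasDerivAt.tendsto_slope_zero_left.comp
    (by simpa using tendsto_neg_nhdsGT_neg (a := (0 : ℝ)))
  refine HasDerivAt.lhopital_zero_nhdsGT (Eventually.of_forall hnum) (Eventually.of_forall hden)
    ?_ ?_ ?_ ?_
  · filter_upwards [self_mem_nhdsWithin] with h (hh : 0 < h)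
    positivity
  · convert (hnum 0).continuousAt.tendsto.mono_left (nhdsWithin_le_nhds (s := Set.Ioi 0)) using 2
    simp only [add_zero, sub_zero]
    ring
  · have := ((continuous_pow 2).tendsto (0 : ℝ)).mono_left (nhdsWithin_le_nhds (s := Set.Ioi 0))
    simpa using this
  · have := (hslope.add hslope_left).div_const 2
    rw [add_self_div_two] at this
    refine this.congr' ?_
    filter_upwards [self_mem_nhdsWithin] with h (hh : 0 < h)
    simp only [Function.comp_apply, smul_eq_mul, ← sub_eq_add_neg]
    field_simp [hh.ne']
    ring

theorem deriv_deriv_mul_exp {u W : ℝ → ℝ} {x : ℝ} (hu : Differentiable ℝ u)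
    (hW : Differentiable ℝ W) (hu' : DifferentiableAt ℝ (deriv u) x)
    (hW' : DifferentiableAt ℝ (deriv W) x) :
    deriv (deriv fun y => u y * exp (W y)) x =
      (deriv (deriv u) x + 2 * deriv u x * deriv W x
        + u x * (deriv W x ^ 2 + deriv (deriv W) x)) * exp (W x) := by
  have hfirst : deriv (fun y => u y * exp (W y)) =
      fun y => (deriv u y + u y * deriv W y) * exp (W y) :=
    funext fun y => ((hu y).hasDerivAt.mul (hW y).hasDerivAt.exp).deriv.trans (by ring)
  rw [hfirst]
  exact ((hu'.hasDerivAt.add ((hu x).hasDerivAt.mul hW'.hasDerivAt)).mul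
    (hW x).hasDerivAt.exp).deriv.trans (by simp only [Pi.add_apply, Pi.mul_apply]; ring)

theorem tendsto_second_difference_mul_exp {u W : ℝ → ℝ} (hu : ContDiff ℝ 2 u)
    (hW : ContDiff ℝ 2 W) (x : ℝ) :
    Tendsto (fun h => (u (x + h) * exp (W (x + h)) + u (x - h) * exp (W (x - h))
        - 2 * (u x * exp (W x))) / h ^ 2) (𝓝[>] 0)
      (𝓝 ((deriv (deriv u) x + 2 * deriv u x * deriv W x
        + u x * (deriv W x ^ 2 + deriv (deriv W) x)) * exp (W x))) := by
  rw [← deriv_deriv_mul_exp (hu.differentiable two_ne_zero) (hW.differentiable two_ne_zero)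
    (hu.differentiable_deriv_two x) (hW.differentiable_deriv_two x)]
  have huW : ContDiff ℝ 2 fun y => u y * exp (W y) := by fun_prop
  exact tendsto_symmetric_second_difference (huW.differentiable two_ne_zero)
    (huW.differentiable_deriv_two x)

/-- Formal continuum limit of the lattice hopping operator.
For `a, r, V` twice continuously differentiable and `ρ := a + r`, the hopping
operator `F_h(x)` of the lattice scheme satisfies
`F_h(x)/h² → (1-ρ)a'' + aρ'' - 2c(a'(1-ρ)V' - aρ'V' + a(1-ρ)V'')` as `h → 0⁺`,
i.e. the discrete lattice dynamics are consistent with a nonlinear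
cross-diffusion–drift operator. -/
theorem lattice_consistency_cross_diffusion
    (c : ℝ) (a r V : ℝ → ℝ)
    (ha : ContDiff ℝ 2 a) (hr : ContDiff ℝ 2 r) (hV : ContDiff ℝ 2 V)
    (x : ℝ) :
    Filter.Tendsto
      (fun h : ℝ =>
        (-(a x) * (1 - (a (x - h) + r (x - h))) * Real.exp (-(c * (V x - V (x - h))))
          + a (x - h) * (1 - (a x + r x)) * Real.exp (-(c * (V (x - h) - V x)))
          - a x * (1 - (a (x + h) + r (x + h))) * Real.exp (-(c * (V x - V (x + h))))
          + a (x + h) * (1 - (a x + r x)) * Real.exp (-(c * (V (x + h) - V x)))) / h ^ 2)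
      (nhdsWithin 0 (Set.Ioi 0))
      (nhds ((1 - (a x + r x)) * deriv (deriv a) x
        + a x * deriv (deriv (fun y => a y + r y)) x
        - 2 * c * (deriv a x * (1 - (a x + r x)) * deriv V x
          - a x * deriv (fun y => a y + r y) x * deriv V x
          + a x * (1 - (a x + r x)) * deriv (deriv V) x))) := by
  have hvacancy := tendsto_second_difference_mul_exp (u := fun y => 1 - (a y + r y))
    (W := fun y => -(c * (V x - V y))) (by fun_prop) (by fun_prop) x
  have hparticle := tendsto_second_difference_mul_exp (u := a)
    (W := fun y => -(c * (V y - V x))) ha (by fun_prop) x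
  convert (hvacancy.const_mul (-a x)).add (hparticle.const_mul (1 - (a x + r x))) using 1
  · funext h
    simp only [sub_self, mul_zero, neg_zero, exp_zero, mul_one]
    ring
  · congr 1
    simp only [deriv_const_sub', deriv.fun_neg', mul_neg, deriv_const_mul_field',
      neg_neg, neg_mul, sub_self, mul_zero, neg_zero, exp_zero, mul_one, deriv_sub_const_fun, even_two,
      Even.neg_pow]
    ring
end

section
/- Let α, β ≥ 0, Λ^max > 0, T > 0, and let g, f : [0,T] → ℝ be continuous with g(t) ≥ 0 and f(t) ≥ 0 for all t. Suppose Λ : [0,T] → ℝ is differentiable and satisfies the pool equation Λ'(t) = −α g(t) Λ(t)/Λ^max + β f(t)(1 − Λ(t)/Λ^max) for all t ∈ [0,T]. If 0 ≤ Λ(0) ≤ Λ^max, then 0 ≤ Λ(t) ≤ Λ^max for all t ∈ [0,T]; that is, the pool concentration never becomes negative and never exceeds its maximal capacity. -/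
open Set

/-! Neither bound of the pool can be crossed: above `Λmax` the outflux term `-α g Λ/Λmax` and the
influx term `β f (1 - Λ/Λmax)` are both nonpositive, below `0` both are nonnegative. A fencing
argument turns these sign conditions at the boundary into the invariance of `[0, Λmax]`. -/

theorem image_le_of_deriv_right_nonpos_of_gt {f f' : ℝ → ℝ} {a b M : ℝ}
    (hf : ContinuousOn f (Icc a b)) (hf' : ∀ x ∈ Ico a b, HasDerivWithinAt f (f' x) (Ici x) x)
    (ha : f a ≤ M) (bound : ∀ x ∈ Ico a b, M < f x → f' x ≤ 0) :
    ∀ x ∈ Icc a b, f x ≤ M := by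
  -- At a contact point the barrier lies above `M`, so `f' ≤ 0 < ε`; the strict fencing lemma
  -- applies, and `ε → 0` gives the claim.
  have barrier : ∀ ε > 0, ∀ t ∈ Icc a b, f t ≤ M + ε * (t - a + 1) := by
    intro ε hε
    have hB : ∀ t, HasDerivAt (fun t => M + ε * (t - a + 1)) ε t := fun t => by
      simpa using ((((hasDerivAt_id t).sub_const a).add_const 1).const_mul ε).const_add M
    refine image_le_of_deriv_right_lt_deriv_boundary hf hf' (by linarith) hB
      fun t ht hcontact => ?_
    have hgt : M < f t := by rw [hcontact]; nlinarith [ht.1]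
    linarith [bound t ht hgt]
  intro x hx
  have hx₁ : 0 < x - a + 1 := by linarith [hx.1]
  refine le_of_forall_pos_le_add fun δ hδ => ?_
  simpa [div_mul_cancel₀ δ hx₁.ne'] using barrier _ (div_pos hδ hx₁) x hx

theorem pool_rate_nonpos_of_capacity_lt {α β g f Λmax L : ℝ} (hα : 0 ≤ α) (hβ : 0 ≤ β)
    (hg : 0 ≤ g) (hf : 0 ≤ f) (hΛmax : 0 < Λmax) (hL : Λmax < L) :
    -α * g * L / Λmax + β * f * (1 - L / Λmax) ≤ 0 := by
  have hout : 0 ≤ α * g * L / Λmax := by have := hΛmax.trans hL; positivity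
  have hin : 1 - L / Λmax ≤ 0 := by rw [sub_nonpos, one_le_div hΛmax]; exact hL.le
  have := mul_nonpos_of_nonneg_of_nonpos (mul_nonneg hβ hf) hin
  rw [neg_mul, neg_mul, neg_div]
  linarith

theorem pool_rate_nonneg_of_neg {α β g f Λmax L : ℝ} (hα : 0 ≤ α) (hβ : 0 ≤ β)
    (hg : 0 ≤ g) (hf : 0 ≤ f) (hΛmax : 0 < Λmax) (hL : L < 0) :
    0 ≤ -α * g * L / Λmax + β * f * (1 - L / Λmax) := by
  have hout : α * g * L / Λmax ≤ 0 :=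
    div_nonpos_of_nonpos_of_nonneg (mul_nonpos_of_nonneg_of_nonpos (by positivity) hL.le) hΛmax.le
  have hin : 0 ≤ 1 - L / Λmax := by linarith [div_neg_of_neg_of_pos hL hΛmax]
  have := mul_nonneg (mul_nonneg hβ hf) hin
  rw [neg_mul, neg_mul, neg_div]
  linarith

theorem pool_ode_capacity_invariant_general
    (α β Λmax T : ℝ) (hα : 0 ≤ α) (hβ : 0 ≤ β) (hΛmax : 0 < Λmax)
    (g f Λ : ℝ → ℝ)
    (hg_nonneg : ∀ t ∈ Icc (0 : ℝ) T, 0 ≤ g t)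
    (hf_nonneg : ∀ t ∈ Icc (0 : ℝ) T, 0 ≤ f t)
    (hΛ_ode : ∀ t ∈ Icc (0 : ℝ) T,
      HasDerivAt Λ (-α * g t * Λ t / Λmax + β * f t * (1 - Λ t / Λmax)) t)
    (h0_lower : 0 ≤ Λ 0) (h0_upper : Λ 0 ≤ Λmax) :
    ∀ t ∈ Icc (0 : ℝ) T, 0 ≤ Λ t ∧ Λ t ≤ Λmax := by
  have hcont : ContinuousOn Λ (Icc 0 T) := fun t ht =>
    (hΛ_ode t ht).continuousAt.continuousWithinAt
  have hderiv : ∀ t ∈ Ico (0 : ℝ) T, HasDerivWithinAt Λ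
      (-α * g t * Λ t / Λmax + β * f t * (1 - Λ t / Λmax)) (Ici t) t := fun t ht =>
    (hΛ_ode t (Ico_subset_Icc_self ht)).hasDerivWithinAt
  have upper := image_le_of_deriv_right_nonpos_of_gt hcont hderiv h0_upper fun t ht hgt =>
    pool_rate_nonpos_of_capacity_lt hα hβ (hg_nonneg t (Ico_subset_Icc_self ht))
      (hf_nonneg t (Ico_subset_Icc_self ht)) hΛmax hgt
  have lower := image_le_of_deriv_right_nonpos_of_gt hcont.neg (fun t ht => (hderiv t ht).neg)
    (neg_nonpos.mpr h0_lower) fun t ht hneg => neg_nonpos.mpr <|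
      pool_rate_nonneg_of_neg hα hβ (hg_nonneg t (Ico_subset_Icc_self ht))
        (hf_nonneg t (Ico_subset_Icc_self ht)) hΛmax (neg_pos.mp hneg)
  exact fun t ht => ⟨neg_nonpos.mp (lower t ht), upper t ht⟩

/-- The pool ODE `Λ' = -α g Λ/Λ^max + β f (1 - Λ/Λ^max)` with
nonnegative continuous data `g, f` preserves the constraint `0 ≤ Λ ≤ Λ^max`:
if `0 ≤ Λ(0) ≤ Λ^max` then `0 ≤ Λ(t) ≤ Λ^max` for all `t ∈ [0,T]`. -/
theorem pool_ode_capacity_invariant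
    (α β Λmax T : ℝ) (hα : 0 ≤ α) (hβ : 0 ≤ β) (hΛmax : 0 < Λmax) (hT : 0 < T)
    (g f Λ : ℝ → ℝ)
    (hg_cont : ContinuousOn g (Icc 0 T)) (hf_cont : ContinuousOn f (Icc 0 T))
    (hg_nonneg : ∀ t ∈ Icc (0 : ℝ) T, 0 ≤ g t)
    (hf_nonneg : ∀ t ∈ Icc (0 : ℝ) T, 0 ≤ f t)
    (hΛ_ode : ∀ t ∈ Icc (0 : ℝ) T,
      HasDerivAt Λ (-α * g t * Λ t / Λmax + β * f t * (1 - Λ t / Λmax)) t)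
    (h0_lower : 0 ≤ Λ 0) (h0_upper : Λ 0 ≤ Λmax) :
    ∀ t ∈ Icc (0 : ℝ) T, 0 ≤ Λ t ∧ Λ t ≤ Λmax :=
  pool_ode_capacity_invariant_general α β Λmax T hα hβ hΛmax g f Λ hg_nonneg hf_nonneg hΛ_ode
    h0_lower h0_upper
end

section
/- Let α, β ≥ 0, Λ^max > 0, τ > 0, and let (g_k)_{k≥0}, (f_k)_{k≥0} be real sequences with 0 ≤ g_k ≤ G and 0 ≤ f_k ≤ F for all k, for some constants G, F ≥ 0. Define the explicit Euler pool iteration Λ^{k+1} = Λ^k + τ(−α g_k Λ^k/Λ^max + β f_k (1 − Λ^k/Λ^max)). If 0 ≤ Λ^0 ≤ Λ^max and the step-size conditions τ α G ≤ Λ^max and τ β F ≤ Λ^max hold, then 0 ≤ Λ^k ≤ Λ^max for every k ≥ 0. -/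
/-!
Writing `p = τ α g_k / Λ^max` and `q = τ β f_k / Λ^max`, the Euler step reads
`Λ^{k+1} = (1 - p) Λ^k + q (Λ^max - Λ^k)`, equivalently
`Λ^max - Λ^{k+1} = (1 - q) (Λ^max - Λ^k) + p Λ^k`.
The step-size conditions say exactly that `p, q ∈ [0, 1]`, so both right-hand sides are
nonnegative combinations of `Λ^k ≥ 0` and `Λ^max - Λ^k ≥ 0`, and the bounds propagate by induction.
-/

open Set

namespace PoolTransport

theorem sub_mul_add_mul_sub_mem_Icc {x M p q : ℝ} (hx : x ∈ Icc 0 M) (hp : p ∈ Icc 0 1) (hq : q ∈ Icc 0 1) :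
    x - p * x + q * (M - x) ∈ Icc 0 M := by
  obtain ⟨hx0, hxM⟩ := hx
  obtain ⟨hp0, hp1⟩ := hp
  obtain ⟨hq0, hq1⟩ := hq
  constructor
  · have : 0 ≤ (1 - p) * x + q * (M - x) := by
      have := mul_nonneg (sub_nonneg.2 hp1) hx0
      have := mul_nonneg hq0 (sub_nonneg.2 hxM)
      linarith
    linarith
  · have : 0 ≤ (1 - q) * (M - x) + p * x := by
      have := mul_nonneg (sub_nonneg.2 hq1) (sub_nonneg.2 hxM)
      have := mul_nonneg hp0 hx0
      linarith
    linarith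

theorem forall_mem_Icc_of_recurrence {M : ℝ} {x p q : ℕ → ℝ} (h0 : x 0 ∈ Icc 0 M)
    (hp : ∀ k, p k ∈ Icc 0 1) (hq : ∀ k, q k ∈ Icc 0 1)
    (hx : ∀ k, x (k + 1) = x k - p k * x k + q k * (M - x k)) :
    ∀ k, x k ∈ Icc 0 M := by
  intro k
  induction k with
  | zero => exact h0
  | succ k ih => exact hx k ▸ sub_mul_add_mul_sub_mem_Icc ih (hp k) (hq k)

theorem step_fraction_mem_Icc {τ c y Y M : ℝ} (hτ : 0 ≤ τ) (hc : 0 ≤ c) (hM : 0 < M)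
    (hy : y ∈ Icc 0 Y) (hstep : τ * c * Y ≤ M) :
    τ * c * y / M ∈ Icc 0 1 := by
  have hτc : 0 ≤ τ * c := mul_nonneg hτ hc
  refine ⟨div_nonneg (mul_nonneg hτc hy.1) hM.le, (div_le_one hM).2 ?_⟩
  exact (mul_le_mul_of_nonneg_left hy.2 hτc).trans hstep

theorem euler_step_eq_sub_mul_add_mul_sub {Λ M τ α β g f : ℝ} (hM : M ≠ 0) :
    Λ + τ * (-α * g * Λ / M + β * f * (1 - Λ / M))
      = Λ - τ * α * g / M * Λ + τ * β * f / M * (M - Λ) := by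
  field_simp
  ring

end PoolTransport

open PoolTransport in
theorem discrete_pool_capacity_invariant_general
    (α β Λmax τ G F : ℝ)
    (hα : 0 ≤ α) (hβ : 0 ≤ β) (hΛmax : 0 < Λmax) (hτ : 0 < τ)
    (g f : ℕ → ℝ)
    (hg : ∀ k, 0 ≤ g k ∧ g k ≤ G) (hf : ∀ k, 0 ≤ f k ∧ f k ≤ F)
    (Λ : ℕ → ℝ)
    (hupd : ∀ k, Λ (k + 1)
      = Λ k + τ * (-α * g k * Λ k / Λmax + β * f k * (1 - Λ k / Λmax)))
    (h0_lower : 0 ≤ Λ 0) (h0_upper : Λ 0 ≤ Λmax)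
    (hstep_out : τ * α * G ≤ Λmax) (hstep_in : τ * β * F ≤ Λmax) :
    ∀ k : ℕ, 0 ≤ Λ k ∧ Λ k ≤ Λmax :=
  forall_mem_Icc_of_recurrence ⟨h0_lower, h0_upper⟩
    (fun k => step_fraction_mem_Icc hτ.le hα hΛmax (hg k) hstep_out)
    (fun k => step_fraction_mem_Icc hτ.le hβ hΛmax (hf k) hstep_in)
    (fun k => (hupd k).trans (euler_step_eq_sub_mul_add_mul_sub hΛmax.ne'))

/-- The explicit Euler pool iteration
`Λ^{k+1} = Λ^k + τ(-α g_k Λ^k/Λ^max + β f_k (1 - Λ^k/Λ^max))` with bounded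
nonnegative data `0 ≤ g_k ≤ G`, `0 ≤ f_k ≤ F` preserves the constraint
`0 ≤ Λ^k ≤ Λ^max` for every `k`, provided `0 ≤ Λ^0 ≤ Λ^max` and the step-size
conditions `τ α G ≤ Λ^max` and `τ β F ≤ Λ^max` hold. -/
theorem discrete_pool_capacity_invariant
    (α β Λmax τ G F : ℝ)
    (hα : 0 ≤ α) (hβ : 0 ≤ β) (hΛmax : 0 < Λmax) (hτ : 0 < τ)
    (hG : 0 ≤ G) (hF : 0 ≤ F)
    (g f : ℕ → ℝ)
    (hg : ∀ k, 0 ≤ g k ∧ g k ≤ G) (hf : ∀ k, 0 ≤ f k ∧ f k ≤ F)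
    (Λ : ℕ → ℝ)
    (hupd : ∀ k, Λ (k + 1)
      = Λ k + τ * (-α * g k * Λ k / Λmax + β * f k * (1 - Λ k / Λmax)))
    (h0_lower : 0 ≤ Λ 0) (h0_upper : Λ 0 ≤ Λmax)
    (hstep_out : τ * α * G ≤ Λmax) (hstep_in : τ * β * F ≤ Λmax) :
    ∀ k : ℕ, 0 ≤ Λ k ∧ Λ k ≤ Λmax :=
  discrete_pool_capacity_invariant_general α β Λmax τ G F hα hβ hΛmax hτ g f hg hf Λ hupd h0_lower
    h0_upper hstep_out hstep_in
end
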